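/- arXiv:1908.00798 — 2 statements merged into one kernel-verified Lean document; each statement's English description precedes it below -/
import Mathlib

section
/- The second-order complete lift is a Lie algebra homomorphism: for smooth vector fields u on ℝⁿ, define the lift u^# on ℝ³ⁿ (coordinates (x,y,z)) with components (u^i(x), (∂u^i/∂x^j) y^j, (∂²u^i/∂x^j∂x^k) y^j y^k + (∂u^i/∂x^j) z^j). Then for all smooth vector fields u, v on ℝⁿ, ([u,v])^# = [u^#, v^#]. -/
/-- The commutator bracket of vector fields on a normed space. -/
noncomputable def vbracket {E : Type*} [NormedAddCommGroup E] [NormedSpace ℝ E]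
    (u v : E → E) : E → E :=
  fun x => fderiv ℝ v x (u x) - fderiv ℝ u x (v x)

/-- The second-order complete lift of a vector field on ℝⁿ to ℝ³ⁿ (coordinates (x,y,z)):
components `(u(x), Du(x)·y, D²u(x)(y,y) + Du(x)·z)`. -/
noncomputable def tlift2 {n : ℕ} (u : (Fin n → ℝ) → (Fin n → ℝ)) :
    ((Fin n → ℝ) × (Fin n → ℝ) × (Fin n → ℝ)) →
      ((Fin n → ℝ) × (Fin n → ℝ) × (Fin n → ℝ)) :=
  fun p =>
    (u p.1, fderiv ℝ u p.1 p.2.1,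
      fderiv ℝ (fun x => fderiv ℝ u x) p.1 p.2.1 p.2.1 + fderiv ℝ u p.1 p.2.2)

section Aux
variable {E F G : Type*} [NormedAddCommGroup E] [NormedSpace ℝ E]
  [NormedAddCommGroup F] [NormedSpace ℝ F] [NormedAddCommGroup G] [NormedSpace ℝ G]

lemma fderiv_clm_const_apply {c : E → F →L[ℝ] G} {x : E} (hc : DifferentiableAt ℝ c x) (b : F) :
    fderiv ℝ (fun y => c y b) x = (fderiv ℝ c x).flip b := by
  rw [fderiv_clm_apply hc (differentiableAt_const b)]
  simp

lemma fderiv_clm_apply_comm {c : E → F →L[ℝ] G} {x : E} (hc : DifferentiableAt ℝ c x)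
    (a : E) (b : F) :
    fderiv ℝ c x a b = fderiv ℝ (fun y => c y b) x a := by
  rw [fderiv_clm_const_apply hc b]; rfl

lemma fderiv2_swap_apply {f : E → F} {x : E} (hf : DifferentiableAt ℝ (fderiv ℝ f) x) (a b : E) :
    fderiv ℝ (fderiv ℝ f) x a b = fderiv ℝ (fun y => fderiv ℝ f y b) x a :=
  fderiv_clm_apply_comm hf a b

lemma fderiv3_symm12 {f : E → F} (hf : ContDiff ℝ (⊤ : ℕ∞) f) (x a b : E) :
    fderiv ℝ (fderiv ℝ (fderiv ℝ f)) x a b = fderiv ℝ (fderiv ℝ (fderiv ℝ f)) x b a :=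
  ((hf.fderiv_right (m := (⊤ : ℕ∞)) (by simp)).contDiffAt.isSymmSndFDerivAt (by simp; exact WithTop.coe_le_coe.2 le_top)).eq a b

lemma fderiv3_symm23 {f : E → F} (hf : ContDiff ℝ (⊤ : ℕ∞) f) (x a b c : E) :
    fderiv ℝ (fderiv ℝ (fderiv ℝ f)) x a b c = fderiv ℝ (fderiv ℝ (fderiv ℝ f)) x a c b := by
  have hD2 : ContDiff ℝ (⊤ : ℕ∞) (fderiv ℝ (fderiv ℝ f)) :=
    (hf.fderiv_right (m := (⊤ : ℕ∞)) (by simp)).fderiv_right (by simp)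
  have key : ∀ b c : E, fderiv ℝ (fderiv ℝ (fderiv ℝ f)) x a b c
      = fderiv ℝ (fun y => fderiv ℝ (fderiv ℝ f) y b c) x a := by
    intro b c
    have h1 : fderiv ℝ (fderiv ℝ (fderiv ℝ f)) x a b
        = fderiv ℝ (fun y => fderiv ℝ (fderiv ℝ f) y b) x a :=
      fderiv_clm_apply_comm (hD2.differentiable (by simp) x) a b
    rw [h1]
    exact fderiv_clm_apply_comm
      ((hD2.differentiable (by simp) x).clm_apply (differentiableAt_const b)) a c
  rw [key b c, key c b]
  have : (fun y => fderiv ℝ (fderiv ℝ f) y b c) = (fun y => fderiv ℝ (fderiv ℝ f) y c b) :=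
    funext fun y => (hf.contDiffAt.isSymmSndFDerivAt (by simp; exact WithTop.coe_le_coe.2 le_top)).eq b c
  rw [this]

lemma contDiff_vbracket {u v : E → E} (hu : ContDiff ℝ (⊤ : ℕ∞) u) (hv : ContDiff ℝ (⊤ : ℕ∞) v) :
    ContDiff ℝ (⊤ : ℕ∞) (vbracket u v) :=
  ((hv.fderiv_right (by simp)).clm_apply hu).sub ((hu.fderiv_right (by simp)).clm_apply hv)

lemma fderiv_vbracket_apply {u v : E → E} (hu : ContDiff ℝ (⊤ : ℕ∞) u) (hv : ContDiff ℝ (⊤ : ℕ∞) v)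
    (x w : E) :
    fderiv ℝ (vbracket u v) x w =
      fderiv ℝ (fderiv ℝ v) x w (u x) + fderiv ℝ v x (fderiv ℝ u x w)
        - (fderiv ℝ (fderiv ℝ u) x w (v x) + fderiv ℝ u x (fderiv ℝ v x w)) := by
  have hDu := hu.fderiv_right (m := (⊤ : ℕ∞)) (by simp)
  have hDv := hv.fderiv_right (m := (⊤ : ℕ∞)) (by simp)
  have d1 : DifferentiableAt ℝ (fun x => fderiv ℝ v x (u x)) x :=
    (hDv.differentiable (by simp) x).clm_apply (hu.differentiable (by simp) x)
  have d2 : DifferentiableAt ℝ (fun x => fderiv ℝ u x (v x)) x :=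
    (hDu.differentiable (by simp) x).clm_apply (hv.differentiable (by simp) x)
  have : fderiv ℝ (vbracket u v) x =
      fderiv ℝ (fun x => fderiv ℝ v x (u x)) x - fderiv ℝ (fun x => fderiv ℝ u x (v x)) x :=
    fderiv_sub d1 d2
  rw [this, fderiv_clm_apply (hDv.differentiable (by simp) x) (hu.differentiable (by simp) x),
    fderiv_clm_apply (hDu.differentiable (by simp) x) (hv.differentiable (by simp) x)]
  simp
  abel

lemma fderiv2_vbracket_apply {u v : E → E} (hu : ContDiff ℝ (⊤ : ℕ∞) u) (hv : ContDiff ℝ (⊤ : ℕ∞) v)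
    (x y : E) :
    fderiv ℝ (fderiv ℝ (vbracket u v)) x y y =
      fderiv ℝ (fderiv ℝ (fderiv ℝ v)) x y y (u x)
        + fderiv ℝ (fderiv ℝ v) x y (fderiv ℝ u x y)
        + fderiv ℝ (fderiv ℝ v) x y (fderiv ℝ u x y)
        + fderiv ℝ v x (fderiv ℝ (fderiv ℝ u) x y y)
        - fderiv ℝ (fderiv ℝ (fderiv ℝ u)) x y y (v x)
        - fderiv ℝ (fderiv ℝ u) x y (fderiv ℝ v x y)
        - fderiv ℝ (fderiv ℝ u) x y (fderiv ℝ v x y)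
        - fderiv ℝ u x (fderiv ℝ (fderiv ℝ v) x y y) := by
  have hDu := hu.fderiv_right (m := (⊤ : ℕ∞)) (by simp)
  have hDv := hv.fderiv_right (m := (⊤ : ℕ∞)) (by simp)
  have hD2u := hDu.fderiv_right (m := (⊤ : ℕ∞)) (by simp)
  have hD2v := hDv.fderiv_right (m := (⊤ : ℕ∞)) (by simp)
  have hb := contDiff_vbracket hu hv
  have hDb := hb.fderiv_right (m := (⊤ : ℕ∞)) (by simp)
  rw [fderiv2_swap_apply (hDb.differentiable (by simp) x) y y]
  have e : (fun x' => fderiv ℝ (vbracket u v) x' y)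
      = fun x' => (fderiv ℝ (fderiv ℝ v) x' y) (u x') + fderiv ℝ v x' (fderiv ℝ u x' y)
        - ((fderiv ℝ (fderiv ℝ u) x' y) (v x') + fderiv ℝ u x' (fderiv ℝ v x' y)) :=
    funext fun x' => fderiv_vbracket_apply hu hv x' y
  rw [e]
  -- differentiability pieces
  have du := hu.differentiable (by simp)
  have dv := hv.differentiable (by simp)
  have dDu := hDu.differentiable (by simp)
  have dDv := hDv.differentiable (by simp)
  have dD2u := hD2u.differentiable (by simp)
  have dD2v := hD2v.differentiable (by simp)
  have cA : DifferentiableAt ℝ (fun x' => fderiv ℝ (fderiv ℝ v) x' y) x :=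
    (dD2v x).clm_apply (differentiableAt_const y)
  have cC : DifferentiableAt ℝ (fun x' => fderiv ℝ (fderiv ℝ u) x' y) x :=
    (dD2u x).clm_apply (differentiableAt_const y)
  have gB : DifferentiableAt ℝ (fun x' => fderiv ℝ u x' y) x :=
    (dDu x).clm_apply (differentiableAt_const y)
  have gD : DifferentiableAt ℝ (fun x' => fderiv ℝ v x' y) x :=
    (dDv x).clm_apply (differentiableAt_const y)
  have dA : DifferentiableAt ℝ (fun x' => (fderiv ℝ (fderiv ℝ v) x' y) (u x')) x :=
    cA.clm_apply (du x)
  have dB : DifferentiableAt ℝ (fun x' => fderiv ℝ v x' (fderiv ℝ u x' y)) x :=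
    (dDv x).clm_apply gB
  have dC : DifferentiableAt ℝ (fun x' => (fderiv ℝ (fderiv ℝ u) x' y) (v x')) x :=
    cC.clm_apply (dv x)
  have dD : DifferentiableAt ℝ (fun x' => fderiv ℝ u x' (fderiv ℝ v x' y)) x :=
    (dDu x).clm_apply gD
  rw [fderiv_fun_sub (dA.fun_add dB) (dC.fun_add dD), fderiv_fun_add dA dB, fderiv_fun_add dC dD,
    fderiv_clm_apply cA (du x), fderiv_clm_apply (dDv x) gB,
    fderiv_clm_apply cC (dv x), fderiv_clm_apply (dDu x) gD,
    fderiv_clm_const_apply (dD2v x) y, fderiv_clm_const_apply (dDu x) y,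
    fderiv_clm_const_apply (dD2u x) y, fderiv_clm_const_apply (dDv x) y]
  simp
  abel
end Aux

lemma fderiv_tlift2_apply {n : ℕ} (w : (Fin n → ℝ) → (Fin n → ℝ)) (hw : ContDiff ℝ (⊤ : ℕ∞) w)
    (p q : (Fin n → ℝ) × (Fin n → ℝ) × (Fin n → ℝ)) :
    fderiv ℝ (tlift2 w) p q =
      (fderiv ℝ w p.1 q.1,
       fderiv ℝ (fderiv ℝ w) p.1 q.1 p.2.1 + fderiv ℝ w p.1 q.2.1,
       fderiv ℝ (fderiv ℝ (fderiv ℝ w)) p.1 q.1 p.2.1 p.2.1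
         + fderiv ℝ (fderiv ℝ w) p.1 q.2.1 p.2.1
         + fderiv ℝ (fderiv ℝ w) p.1 p.2.1 q.2.1
         + fderiv ℝ (fderiv ℝ w) p.1 q.1 p.2.2
         + fderiv ℝ w p.1 q.2.2) := by
  have hDw : ContDiff ℝ (⊤ : ℕ∞) (fderiv ℝ w) := hw.fderiv_right (by simp)
  have hD2w : ContDiff ℝ (⊤ : ℕ∞) (fderiv ℝ (fderiv ℝ w)) := hDw.fderiv_right (by simp)
  have hfst : HasFDerivAt (fun p : (Fin n → ℝ) × (Fin n → ℝ) × (Fin n → ℝ) => p.1)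
      (ContinuousLinearMap.fst ℝ (Fin n → ℝ) ((Fin n → ℝ) × (Fin n → ℝ))) p := hasFDerivAt_fst
  have h21 : HasFDerivAt (fun p : (Fin n → ℝ) × (Fin n → ℝ) × (Fin n → ℝ) => p.2.1)
      ((ContinuousLinearMap.fst ℝ (Fin n → ℝ) (Fin n → ℝ)).comp (ContinuousLinearMap.snd ℝ (Fin n → ℝ) ((Fin n → ℝ) × (Fin n → ℝ)))) p :=
    HasFDerivAt.comp p hasFDerivAt_fst hasFDerivAt_snd
  have h22 : HasFDerivAt (fun p : (Fin n → ℝ) × (Fin n → ℝ) × (Fin n → ℝ) => p.2.2)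
      ((ContinuousLinearMap.snd ℝ (Fin n → ℝ) (Fin n → ℝ)).comp (ContinuousLinearMap.snd ℝ (Fin n → ℝ) ((Fin n → ℝ) × (Fin n → ℝ)))) p :=
    HasFDerivAt.comp p hasFDerivAt_snd hasFDerivAt_snd
  have hA : HasFDerivAt (fun p : (Fin n → ℝ) × (Fin n → ℝ) × (Fin n → ℝ) => w p.1)
      ((fderiv ℝ w p.1).comp (ContinuousLinearMap.fst ℝ (Fin n → ℝ) ((Fin n → ℝ) × (Fin n → ℝ)))) p :=
    HasFDerivAt.comp p ((hw.differentiable (by simp) p.1).hasFDerivAt) hfst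
  have hc : HasFDerivAt (fun p : (Fin n → ℝ) × (Fin n → ℝ) × (Fin n → ℝ) => fderiv ℝ w p.1)
      ((fderiv ℝ (fderiv ℝ w) p.1).comp (ContinuousLinearMap.fst ℝ (Fin n → ℝ) ((Fin n → ℝ) × (Fin n → ℝ)))) p :=
    HasFDerivAt.comp p ((hDw.differentiable (by simp) p.1).hasFDerivAt) hfst
  have hB := hc.clm_apply h21
  have hc2 : HasFDerivAt (fun p : (Fin n → ℝ) × (Fin n → ℝ) × (Fin n → ℝ) => fderiv ℝ (fderiv ℝ w) p.1)
      ((fderiv ℝ (fderiv ℝ (fderiv ℝ w)) p.1).comp (ContinuousLinearMap.fst ℝ (Fin n → ℝ) ((Fin n → ℝ) × (Fin n → ℝ)))) p :=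
    HasFDerivAt.comp p ((hD2w.differentiable (by simp) p.1).hasFDerivAt) hfst
  have hc1 := hc2.clm_apply h21
  have hC1 := hc1.clm_apply h21
  have hC := hC1.fun_add (hc.clm_apply h22)
  have htot := hA.prodMk (hB.prodMk hC)
  rw [show tlift2 w = fun x : (Fin n → ℝ) × (Fin n → ℝ) × (Fin n → ℝ) =>
      (w x.1, fderiv ℝ w x.1 x.2.1,
        fderiv ℝ (fderiv ℝ w) x.1 x.2.1 x.2.1 + fderiv ℝ w x.1 x.2.2) from rfl,
    htot.fderiv]
  simp
  abel_nf
  simp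

set_option maxHeartbeats 1600000 in
/-- The second-order complete lift is a Lie algebra homomorphism:
`([u,v])^# = [u^#, v^#]` on `T^(2)ℝⁿ ≅ ℝ³ⁿ`. -/
theorem second_order_complete_lift_is_lie_algebra_hom (n : ℕ)
    (u v : (Fin n → ℝ) → (Fin n → ℝ))
    (hu : ContDiff ℝ (⊤ : ℕ∞) u) (hv : ContDiff ℝ (⊤ : ℕ∞) v) :
    tlift2 (vbracket u v) = vbracket (tlift2 u) (tlift2 v) := by
  funext p
  obtain ⟨x, y, z⟩ := p
  set p : (Fin n → ℝ) × (Fin n → ℝ) × (Fin n → ℝ) := (x, y, z) with hp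
  have L : tlift2 (vbracket u v) p =
      (vbracket u v x, fderiv ℝ (vbracket u v) x y,
        fderiv ℝ (fderiv ℝ (vbracket u v)) x y y + fderiv ℝ (vbracket u v) x z) := rfl
  have R : vbracket (tlift2 u) (tlift2 v) p =
      fderiv ℝ (tlift2 v) p (tlift2 u p) - fderiv ℝ (tlift2 u) p (tlift2 v p) := rfl
  have hup : tlift2 u p = (u x, fderiv ℝ u x y,
      fderiv ℝ (fderiv ℝ u) x y y + fderiv ℝ u x z) := rfl
  have hvp : tlift2 v p = (v x, fderiv ℝ v x y,
      fderiv ℝ (fderiv ℝ v) x y y + fderiv ℝ v x z) := rfl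
  rw [L, R, fderiv_tlift2_apply v hv p (tlift2 u p), fderiv_tlift2_apply u hu p (tlift2 v p),
    hup, hvp]
  have hpx : p.1 = x := rfl
  have hpy : p.2.1 = y := rfl
  have hpz : p.2.2 = z := rfl
  simp only [hpx, hpy, hpz, Prod.mk_sub_mk]
  have su : IsSymmSndFDerivAt ℝ u x := hu.contDiffAt.isSymmSndFDerivAt (by simp; exact WithTop.coe_le_coe.2 le_top)
  have sv : IsSymmSndFDerivAt ℝ v x := hv.contDiffAt.isSymmSndFDerivAt (by simp; exact WithTop.coe_le_coe.2 le_top)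
  refine Prod.ext rfl (Prod.ext ?_ ?_)
  · show fderiv ℝ (vbracket u v) x y = _
    rw [fderiv_vbracket_apply hu hv x y, sv.eq (u x) y, su.eq (v x) y]
  · show fderiv ℝ (fderiv ℝ (vbracket u v)) x y y + fderiv ℝ (vbracket u v) x z = _
    rw [fderiv2_vbracket_apply hu hv x y, fderiv_vbracket_apply hu hv x z,
      fderiv3_symm12 hv x (u x) y, fderiv3_symm23 hv x y (u x) y,
      fderiv3_symm12 hu x (v x) y, fderiv3_symm23 hu x y (v x) y,
      sv.eq (fderiv ℝ u x y) y, su.eq (fderiv ℝ v x y) y,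
      sv.eq (u x) z, su.eq (v x) z, map_add, map_add]
    abel
end

section
/- A polynomial E in the variables y^j_{(a)} (a = 1,…,N, j = 1,…,n, over ℝ) is admissible — i.e. for every a and j the partial derivative ∂E/∂y^j_{(a)} has weighted order at most a, where y^j_{(b)} carries weight b — if and only if E has the form E(y) = C + Σ_{a=1}^{N} ( λ_{(a)i} y^i_{(a)} + (1/2) κ_{(a)ij} y^i_{(a)} y^j_{(a)} ) for a constant C, constant vectors λ_{(a)}, and constant symmetric matrices κ_{(a)}. In other words, an admissible internal energy contains no cross terms between different modes and is at most quadratic in each mode's variables. -/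
open MvPolynomial

/-!
By `coeff_pderiv`, `∂E/∂y_v` has weighted order at most `w v` exactly when every monomial `m` of
`E` containing `y_v` has weight at most `2 w v`. As all weights are positive, comparing with the
lightest variable of `m` gives `deg m ≤ 2`, and for two distinct variables `u, v` of `m` the
bounds `w u + w v ≤ 2 w u` and `w u + w v ≤ 2 w v` force `w u = w v`. So `E` is admissible iff it
is supported on monomials of degree at most two in the variables of a single mode, i.e. iff it lies
in the span of `1`, `y^i_{(a)}` and `y^i_{(a)} y^j_{(a)}`, which consists of the forms
`C + Σ_a (λ_{(a)i} y^i_{(a)} + ½ κ_{(a)ij} y^i_{(a)} y^j_{(a)})`; replacing `κ_{(a)}` by its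
symmetric part does not change the form.
-/

namespace Finsupp

variable {σ : Type*}

theorem degree_mul_le_weight (w : σ → ℕ) {m : σ →₀ ℕ} {c : ℕ} (h : ∀ v ∈ m.support, c ≤ w v) :
    m.degree * c ≤ m.weight w := by
  rw [degree_apply, weight_apply, Finsupp.sum, Finset.sum_mul]
  exact Finset.sum_le_sum fun v hv => Nat.mul_le_mul_left _ (h v hv)

theorem weight_eq_degree_mul (w : σ → ℕ) {m : σ →₀ ℕ} {c : ℕ} (h : ∀ v ∈ m.support, w v = c) :
    m.weight w = m.degree * c := by
  rw [degree_apply, weight_apply, Finsupp.sum, Finset.sum_mul]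
  exact Finset.sum_congr rfl fun v hv => by rw [h v hv, smul_eq_mul]

theorem add_le_weight (w : σ → ℕ) {m : σ →₀ ℕ} {u v : σ} (hu : u ∈ m.support)
    (hv : v ∈ m.support) (huv : u ≠ v) : w u + w v ≤ m.weight w := by
  classical
  have hsub : {u, v} ⊆ m.support := Finset.insert_subset hu (Finset.singleton_subset_iff.mpr hv)
  rw [weight_apply, Finsupp.sum, ← Finset.sum_pair (f := w) huv]
  calc ∑ i ∈ {u, v}, w i ≤ ∑ i ∈ {u, v}, m i • w i :=
        Finset.sum_le_sum fun i hi =>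
          Nat.le_mul_of_pos_left _ (Nat.pos_of_ne_zero (mem_support_iff.mp (hsub hi)))
    _ ≤ ∑ i ∈ m.support, m i • w i := Finset.sum_le_sum_of_subset hsub

theorem eq_zero_or_eq_single_of_degree_le_one {m : σ →₀ ℕ} (h : m.degree ≤ 1) :
    m = 0 ∨ ∃ u, m = single u 1 := by
  rcases Nat.le_one_iff_eq_zero_or_eq_one.mp h with h | h
  · exact .inl ((degree_eq_zero_iff m).mp h)
  · obtain ⟨u, hu⟩ : m ∈ Set.range fun u : σ => single u 1 := range_single_one.symm ▸ h
    exact .inr ⟨u, hu.symm⟩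

theorem eq_zero_or_eq_single_or_eq_add_single_of_degree_le_two {m : σ →₀ ℕ} (h : m.degree ≤ 2) :
    m = 0 ∨ (∃ u, m = single u 1) ∨ ∃ u v, m = single u 1 + single v 1 := by
  rcases eq_or_ne m 0 with rfl | hm
  · exact .inl rfl
  obtain ⟨u, hu⟩ := Finsupp.support_nonempty_iff.mpr hm
  have hmu := Finsupp.mem_support_iff.mp hu
  have hdeg := weight_sub_single_add (w := fun _ => (1 : ℕ)) hmu
  rw [← degree_eq_weight_one] at hdeg
  rw [← sub_add_single_one_cancel hmu]
  rcases eq_zero_or_eq_single_of_degree_le_one (m := m - single u 1) (by omega) with h0 | ⟨v, hv⟩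
  · exact .inr (.inl ⟨u, by rw [h0, zero_add]⟩)
  · exact .inr (.inr ⟨v, u, by rw [hv]⟩)

theorem mem_support_single_add_single {u v x : σ}
    (hx : x ∈ (Finsupp.single u 1 + Finsupp.single v 1).support) : x = u ∨ x = v := by
  classical
  rcases Finset.mem_union.mp (Finsupp.support_add hx) with h | h <;>
    simp only [Finset.mem_singleton.mp (Finsupp.support_single_subset h), true_or, or_true]

end Finsupp

namespace MvPolynomial

def admissibleMonomials {σ : Type*} (w : σ → ℕ) : Set (σ →₀ ℕ) :=
  {m | ∀ v ∈ m.support, m.weight w ≤ 2 * w v}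

def equiweightQuadraticMonomials {σ : Type*} (w : σ → ℕ) : Set (σ →₀ ℕ) :=
  {m | m.degree ≤ 2 ∧ ∀ u ∈ m.support, ∀ v ∈ m.support, w u = w v}

section Derivative

variable {R σ : Type*} [CommSemiring R] [NoZeroDivisors R] [CharZero R]

theorem mem_support_pderiv_iff (p : MvPolynomial σ R) (v : σ) (m : σ →₀ ℕ) :
    m ∈ (pderiv v p).support ↔ m + Finsupp.single v 1 ∈ p.support := by
  simp only [mem_support_iff, coeff_pderiv, ne_eq, mul_eq_zero, not_or]
  exact and_iff_left (Nat.cast_add_one_ne_zero _)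

theorem weightedTotalDegree_pderiv_le_iff (w : σ → ℕ) (p : MvPolynomial σ R) (v : σ) (d : ℕ) :
    weightedTotalDegree w (pderiv v p) ≤ d ↔
      ∀ m ∈ p.support, m v ≠ 0 → m.weight w ≤ d + w v := by
  have weight_add_single : ∀ m : σ →₀ ℕ, (m + Finsupp.single v 1).weight w = m.weight w + w v :=
    fun m => by simp [Finsupp.weight_single]
  rw [weightedTotalDegree, Finset.sup_le_iff]
  constructor
  · intro h m hm hv
    rw [← Finsupp.sub_add_single_one_cancel hv] at hm ⊢
    have := h _ ((mem_support_pderiv_iff p v _).2 hm)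
    rw [weight_add_single]
    omega
  · intro h m hm
    have := h _ ((mem_support_pderiv_iff p v m).1 hm) (by simp)
    rw [weight_add_single] at this
    omega

theorem forall_weightedTotalDegree_pderiv_le_iff (w : σ → ℕ) (p : MvPolynomial σ R) :
    (∀ v, weightedTotalDegree w (pderiv v p) ≤ w v) ↔
      p ∈ restrictSupport R (admissibleMonomials w) := by
  simp only [weightedTotalDegree_pderiv_le_iff, mem_restrictSupport_iff, Set.subset_def,
    Finset.mem_coe, admissibleMonomials, Set.mem_ofPred_eq, Finsupp.mem_support_iff, two_mul]
  exact forall_comm.trans (forall_congr' fun m => forall_comm)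

end Derivative

section Monomials

variable {σ : Type*} (w : σ → ℕ)

theorem equiweightQuadraticMonomials_subset_admissibleMonomials :
    equiweightQuadraticMonomials w ⊆ admissibleMonomials w := by
  rintro m ⟨hdeg, heq⟩ v hv
  rw [Finsupp.weight_eq_degree_mul w fun u hu => heq u hu v hv]
  exact Nat.mul_le_mul_right _ hdeg

theorem mem_equiweightQuadraticMonomials_of_mem_admissibleMonomials {m : σ →₀ ℕ}
    (hw : ∀ v ∈ m.support, 0 < w v) (hm : m ∈ admissibleMonomials w) :
    m ∈ equiweightQuadraticMonomials w := by
  refine ⟨?_, fun u hu v hv => ?_⟩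
  · rcases m.support.eq_empty_or_nonempty with h | hne
    · simp [Finsupp.degree_apply, h]
    obtain ⟨v₀, hv₀, hmin⟩ := m.support.exists_min_image w hne
    exact Nat.le_of_mul_le_mul_right
      ((Finsupp.degree_mul_le_weight w hmin).trans (hm v₀ hv₀)) (hw v₀ hv₀)
  · by_cases huv : u = v
    · rw [huv]
    have := Finsupp.add_le_weight w hu hv huv
    have := hm u hu
    have := hm v hv
    omega

theorem admissibleMonomials_inter_eq {s : Set σ} (hs : ∀ v ∈ s, 0 < w v) :
    admissibleMonomials w ∩ {m | ↑m.support ⊆ s} =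
      equiweightQuadraticMonomials w ∩ {m | ↑m.support ⊆ s} := by
  ext m
  refine ⟨fun ⟨hm, hms⟩ => ⟨?_, hms⟩, fun ⟨hm, hms⟩ => ⟨?_, hms⟩⟩
  · exact mem_equiweightQuadraticMonomials_of_mem_admissibleMonomials w
      (fun v hv => hs v (hms hv)) hm
  · exact equiweightQuadraticMonomials_subset_admissibleMonomials w hm

end Monomials

theorem sum_sum_C_mul_X_mul_X_transpose {ι σ R : Type*} [Fintype ι] [CommSemiring R]
    (x : ι → σ) (k : ι → ι → R) :
    ∑ i, ∑ j, C (k j i) * X (x i) * X (x j) = ∑ i, ∑ j, C (k i j) * X (x i) * X (x j) := by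
  rw [Finset.sum_comm]
  exact Finset.sum_congr rfl fun _ _ => Finset.sum_congr rfl fun _ _ => by ring

theorem sum_sum_C_mul_X_mul_X_symmetrize {ι σ K : Type*} [Fintype ι] [Field K] [NeZero (2 : K)]
    (x : ι → σ) (k : ι → ι → K) :
    ∑ i, ∑ j, C ((k i j + k j i) / 2) * X (x i) * X (x j) =
      ∑ i, ∑ j, C (k i j) * X (x i) * X (x j) := by
  have h := sum_sum_C_mul_X_mul_X_transpose x fun i j => k i j / 2
  simp only [add_div, map_add, add_mul, Finset.sum_add_distrib, h, ← two_nsmul, Finset.smul_sum,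
    ← smul_mul_assoc, nsmul_eq_mul, Nat.cast_ofNat]
  refine Finset.sum_congr rfl fun i _ => Finset.sum_congr rfl fun j _ => ?_
  rw [← map_ofNat C 2, ← C_mul, mul_div_cancel₀ _ two_ne_zero]

section EnergyForm

def modeVariables (n N : ℕ) : Set (ℕ × Fin n) :=
  {v | v.1 ∈ Finset.Icc 1 N}

noncomputable def energyForm (n N : ℕ) :
    (ℝ × (ℕ → Fin n → ℝ) × (ℕ → Fin n → Fin n → ℝ)) →ₗ[ℝ] MvPolynomial (ℕ × Fin n) ℝ where
  toFun p := C p.1 + ∑ a ∈ Finset.Icc 1 N,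
    ((∑ i : Fin n, C (p.2.1 a i) * X (a, i)) +
      (1 / 2 : ℝ) • ∑ i : Fin n, ∑ j : Fin n, C (p.2.2 a i j) * X (a, i) * X (a, j))
  map_add' p q := by
    simp only [Prod.fst_add, Prod.snd_add, Pi.add_apply, map_add, add_mul, Finset.sum_add_distrib,
      smul_add]
    abel
  map_smul' r p := by
    simp only [Prod.smul_fst, Prod.smul_snd, Pi.smul_apply, smul_eq_mul, C_mul, mul_assoc,
      ← Finset.mul_sum, RingHom.id_apply, smul_add, ← C_mul']
    rw [Finset.mul_sum]
    exact congrArg _ (Finset.sum_congr rfl fun _ _ => by ring)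

variable {n N : ℕ}

theorem one_mem_range_energyForm :
    (1 : MvPolynomial (ℕ × Fin n) ℝ) ∈ LinearMap.range (energyForm n N) :=
  ⟨(1, 0, 0), by simp [energyForm]⟩

theorem X_mem_range_energyForm {a : ℕ} (ha : a ∈ Finset.Icc 1 N) (i : Fin n) :
    X (a, i) ∈ LinearMap.range (energyForm n N) :=
  ⟨(0, Pi.single a (Pi.single i 1), 0), by
    simp [energyForm, Pi.single_apply, ite_apply, apply_ite C, ite_mul, ha]⟩

theorem X_mul_X_mem_range_energyForm {a : ℕ} (ha : a ∈ Finset.Icc 1 N) (i j : Fin n) :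
    X (a, i) * X (a, j) ∈ LinearMap.range (energyForm n N) :=
  ⟨(0, 0, Pi.single a (Pi.single i (Pi.single j 2))), by
    simp [energyForm, Pi.single_apply, ite_apply, apply_ite C, ite_mul, ha]
    rw [smul_eq_C_mul, ← mul_assoc, ← mul_assoc, ← C_mul]
    norm_num⟩

theorem range_energyForm_le :
    LinearMap.range (energyForm n N) ≤ restrictSupport ℝ
      (equiweightQuadraticMonomials Prod.fst ∩ {m | ↑m.support ⊆ modeVariables n N}) := by
  rintro _ ⟨⟨c, lam, kap⟩, rfl⟩
  simp only [energyForm, LinearMap.coe_mk, AddHom.coe_mk]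
  refine add_mem ?_ (Submodule.sum_mem _ fun a ha => add_mem (Submodule.sum_mem _ fun i _ => ?_)
    (Submodule.smul_mem _ _ (Submodule.sum_mem _ fun i _ => Submodule.sum_mem _ fun j _ => ?_)))
  · rw [C_apply, monomial_mem_restrictSupport]
    exact .inl ⟨⟨by simp, by simp⟩, by simp⟩
  · rw [C_mul_X_eq_monomial, monomial_mem_restrictSupport]
    have hsupp {x : ℕ × Fin n} (hx : x ∈ (Finsupp.single (a, i) 1).support) : x = (a, i) :=
      Finset.mem_singleton.mp (Finsupp.support_single_subset hx)
    refine .inl ⟨⟨by simp, fun x hx y hy => by rw [hsupp hx, hsupp hy]⟩, fun x hx => ?_⟩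
    rwa [hsupp hx]
  · rw [C_mul_X_eq_monomial, X, monomial_mul, mul_one, monomial_mem_restrictSupport]
    have hsupp {x : ℕ × Fin n}
        (hx : x ∈ (Finsupp.single (a, i) 1 + Finsupp.single (a, j) 1).support) : x.1 = a := by
      rcases Finsupp.mem_support_single_add_single hx with rfl | rfl <;> rfl
    refine .inl ⟨⟨?_, fun x hx y hy => by simp only [hsupp hx, hsupp hy]⟩, fun x hx => ?_⟩
    · simp
    · show x.1 ∈ Finset.Icc 1 N
      rwa [hsupp hx]

theorem restrictSupport_le_range_energyForm :
    restrictSupport ℝ (equiweightQuadraticMonomials Prod.fst ∩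
      {m | ↑m.support ⊆ modeVariables n N}) ≤ LinearMap.range (energyForm n N) := by
  rw [restrictSupport_eq_span, Submodule.span_le]
  rintro _ ⟨m, ⟨⟨hdeg, hw⟩, hvars⟩, rfl⟩
  rcases Finsupp.eq_zero_or_eq_single_or_eq_add_single_of_degree_le_two hdeg with
    rfl | ⟨⟨a, i⟩, rfl⟩ | ⟨⟨a, i⟩, ⟨b, j⟩, rfl⟩
  · dsimp only
    rw [← C_apply, C_1]
    exact one_mem_range_energyForm
  · exact X_mem_range_energyForm (@hvars (a, i) (by simp)) i
  · obtain rfl : a = b := hw (a, i) (by simp) (b, j) (by simp)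
    dsimp only
    rw [← mul_one (1 : ℝ), ← monomial_mul]
    exact X_mul_X_mem_range_energyForm (@hvars (a, i) (by simp)) i j

theorem range_energyForm : LinearMap.range (energyForm n N) = restrictSupport ℝ
    (equiweightQuadraticMonomials Prod.fst ∩ {m | ↑m.support ⊆ modeVariables n N}) :=
  le_antisymm range_energyForm_le restrictSupport_le_range_energyForm

theorem energyForm_symmetrize (c : ℝ) (lam : ℕ → Fin n → ℝ) (kap : ℕ → Fin n → Fin n → ℝ) :
    energyForm n N (c, lam, fun a i j => (kap a i j + kap a j i) / 2) =
      energyForm n N (c, lam, kap) := by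
  simp only [energyForm, LinearMap.coe_mk, AddHom.coe_mk,
    sum_sum_C_mul_X_mul_X_symmetrize (fun i => (_, i))]

end EnergyForm

end MvPolynomial

/-- Characterization of admissible internal energies: a polynomial `E` in the variables
`y^j_{(a)}`, `a = 1,…,N`, `j = 1,…,n` (variable `(a,j)` of weight `a`) is admissible
— every `∂E/∂y^j_{(a)}` has weighted order at most `a` — if and only if
`E = C + Σ_{a=1}^{N} ( λ_{(a)i} y^i_{(a)} + (1/2) κ_{(a)ij} y^i_{(a)} y^j_{(a)} )`
for a constant `C`, constant vectors `λ_{(a)}`, and symmetric matrices `κ_{(a)}`: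
no cross terms between different modes and at most quadratic in each mode. -/
theorem admissible_iff_linear_quadratic_no_cross_terms
    (n N : ℕ) (E : MvPolynomial (ℕ × Fin n) ℝ)
    (hvars : ∀ m ∈ E.support, ∀ v ∈ m.support, 1 ≤ v.1 ∧ v.1 ≤ N) :
    (∀ (a : ℕ) (j : Fin n),
        weightedTotalDegree (fun v : ℕ × Fin n => v.1) (pderiv (a, j) E) ≤ a)
      ↔ ∃ (c : ℝ) (lam : ℕ → Fin n → ℝ) (kap : ℕ → Fin n → Fin n → ℝ),
          (∀ a i j, kap a i j = kap a j i) ∧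
          E = C c + ∑ a ∈ Finset.Icc 1 N,
            ((∑ i : Fin n, C (lam a i) * X (a, i)) +
              (1 / 2 : ℝ) •
                ∑ i : Fin n, ∑ j : Fin n, C (kap a i j) * X (a, i) * X (a, j)) := by
  have hE : E ∈ restrictSupport ℝ {m | ↑m.support ⊆ modeVariables n N} :=
    fun m hm v hv => Finset.mem_Icc.mpr (hvars m hm v hv)
  have hadmissible : (∀ (a : ℕ) (j : Fin n),
      weightedTotalDegree (fun v : ℕ × Fin n => v.1) (pderiv (a, j) E) ≤ a) ↔
        E ∈ LinearMap.range (energyForm n N) := by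
    rw [← Prod.forall (p := fun v => weightedTotalDegree Prod.fst (pderiv v E) ≤ v.1),
      forall_weightedTotalDegree_pderiv_le_iff, range_energyForm,
      ← admissibleMonomials_inter_eq (s := modeVariables n N) Prod.fst
        fun v (hv : v.1 ∈ Finset.Icc 1 N) => (Finset.mem_Icc.mp hv).1]
    simp only [mem_restrictSupport_iff, Set.subset_inter_iff]
    exact (and_iff_left hE).symm
  rw [hadmissible, LinearMap.mem_range]
  constructor
  · rintro ⟨⟨c, lam, kap⟩, rfl⟩
    exact ⟨c, lam, fun a i j => (kap a i j + kap a j i) / 2, fun a i j => by ring,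
      (energyForm_symmetrize c lam kap).symm⟩
  · rintro ⟨c, lam, kap, -, rfl⟩
    exact ⟨(c, lam, kap), rfl⟩
end
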